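/- Let q ≥ 2 and V = F_q^{q+1}. Every simplex point of V is contained in exactly (q-1)! simplex lines. -/

import Mathlib

/-- A vector of `F^n` is *simplex* if exactly one of its coordinates is zero. -/
def SimplexVec {F : Type*} [Field F] [DecidableEq F] {n : ℕ} (x : Fin n → F) : Prop :=
  (Finset.univ.filter (fun i => x i = 0)).card = 1

/-- A *simplex point* is a 1-dimensional subspace spanned by a simplex vector. -/
def SimplexPoint {F : Type*} [Field F] [DecidableEq F] {n : ℕ}
    (P : Submodule F (Fin n → F)) : Prop :=
  ∃ x : Fin n → F, SimplexVec x ∧ P = Submodule.span F {x}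

/-- A *simplex line* is a 2-dimensional subspace all of whose nonzero vectors
are simplex. -/
def SimplexLine {F : Type*} [Field F] [DecidableEq F] {n : ℕ}
    (L : Submodule F (Fin n → F)) : Prop :=
  Module.finrank F ↥L = 2 ∧ ∀ x ∈ L, x ≠ 0 → SimplexVec x

/-!
Let `x` be a simplex vector with zero coordinate `i₀`. For `y` with `y i₀ ≠ 0`, the zeros of
`y - c • x` are exactly the `j ≠ i₀` with `y j / x j = c`, so `span {x, y}` is a simplex line iff
the ratios `j ↦ y j / x j` form a bijection `{j // j ≠ i₀} ≃ F`. On a simplex line, evaluation at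
two coordinates `i₀ ≠ j₀` is injective, hence bijective onto `F × F`: each simplex line through `x`
contains exactly one `y` with `y i₀ = 1` and `y j₀ = 0`. Simplex lines through `x` therefore
correspond to the bijections `{j // j ≠ i₀} ≃ F` sending `j₀` to `0`, and there are `(q - 1)!`
of these.
-/

open Module Submodule Function

theorem existsUnique_subtype_ne_iff {α : Type*} {p : α → Prop} {a : α} (ha : ¬p a) :
    (∃! x : {x // x ≠ a}, p x) ↔ ∃! x, p x := by
  constructor
  · rintro ⟨x, hx, huniq⟩
    exact ⟨x, hx, fun y hy =>
      congrArg Subtype.val (huniq ⟨y, ne_of_apply_ne p (by simp [hy, ha])⟩ hy)⟩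
  · rintro ⟨x, hx, huniq⟩
    exact ⟨⟨x, ne_of_apply_ne p (by simp [hx, ha])⟩, hx, fun y hy => Subtype.ext (huniq y hy)⟩

theorem Fintype.card_subtype_equiv_apply_eq {α β : Type*} [Fintype α] [DecidableEq α]
    [Fintype β] [DecidableEq β] (h : Fintype.card α = Fintype.card β) (a : α) (b : β) :
    Fintype.card {e : α ≃ β // e a = b} = (Fintype.card α - 1).factorial := by
  have hne : Fintype.card {x // x ≠ a} = Fintype.card {y // y ≠ b} := by
    simp only [ne_eq, Fintype.card_subtype_compl, Fintype.card_unique, h]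
  calc Fintype.card {e : α ≃ β // e a = b}
      = Fintype.card ({x // x ≠ a} ≃ {y // y ≠ b}) :=
        Fintype.card_congr <| (((Equiv.optionSubtypeNe a).equivCongr (.refl β)).subtypeEquiv
          (by simp)).symm.trans (Equiv.optionSubtype b)
    _ = (Fintype.card α - 1).factorial := by
        rw [Fintype.card_equiv (Fintype.equivOfCardEq hne)]
        simp

section

variable {F : Type*} [Field F]

theorem finrank_span_pair_eq_two {ι : Type*} {x y : ι → F} {i : ι} (hx : x ≠ 0) (hxi : x i = 0)
    (hyi : y i ≠ 0) : finrank F (span F {x, y}) = 2 := by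
  have hli : LinearIndependent F ![x, y] :=
    (LinearIndependent.pair_iff' hx).2 fun a h => hyi (by simp [← h, hxi])
  have := finrank_span_eq_card hli
  rwa [Matrix.range_cons_cons_empty, Fintype.card_fin] at this

variable {n : ℕ} {x y : Fin n → F} {i₀ j₀ : Fin n}

def vecOfRatio (x : Fin n → F) (i₀ : Fin n) (r : {j // j ≠ i₀} → F) : Fin n → F :=
  fun j => if h : j = i₀ then 1 else r ⟨j, h⟩ * x j

theorem vecOfRatio_self (r : {j // j ≠ i₀} → F) : vecOfRatio x i₀ r i₀ = 1 := dif_pos rfl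

theorem vecOfRatio_of_ne (r : {j // j ≠ i₀} → F) {j : Fin n} (hj : j ≠ i₀) :
    vecOfRatio x i₀ r j = r ⟨j, hj⟩ * x j := dif_neg hj

theorem vecOfRatio_div (hx : ∀ j, x j = 0 ↔ j = i₀) (r : {j // j ≠ i₀} → F) (j : {j // j ≠ i₀}) :
    vecOfRatio x i₀ r j / x j = r j := by
  rw [vecOfRatio_of_ne r j.2, mul_div_cancel_right₀ _ (mt (hx j).1 j.2)]

theorem vecOfRatio_div_self (hx : ∀ j, x j = 0 ↔ j = i₀) (hy : y i₀ = 1) :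
    vecOfRatio x i₀ (fun j => y j / x j) = y := by
  funext j
  by_cases hj : j = i₀
  · rw [hj, vecOfRatio_self, hy]
  · rw [vecOfRatio_of_ne _ hj, div_mul_cancel₀ _ (mt (hx j).1 hj)]

variable [DecidableEq F]

theorem simplexVec_iff_existsUnique {v : Fin n → F} : SimplexVec v ↔ ∃! i, v i = 0 := by
  simp [SimplexVec, Finset.card_eq_one_iff_existsUnique]

theorem simplexVec_smul_iff {a : F} (ha : a ≠ 0) {v : Fin n → F} :
    SimplexVec (a • v) ↔ SimplexVec v := by
  simp [simplexVec_iff_existsUnique, ha]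

theorem simplexVec_sub_smul_iff (hx : ∀ j, x j = 0 ↔ j = i₀) (hy : y i₀ ≠ 0) (c : F) :
    SimplexVec (y - c • x) ↔ ∃! j : {j // j ≠ i₀}, y j / x j = c := by
  have hxi₀ : x i₀ = 0 := (hx i₀).2 rfl
  rw [simplexVec_iff_existsUnique,
    ← existsUnique_subtype_ne_iff (a := i₀) (by simpa [hxi₀] using hy)]
  refine existsUnique_congr fun j => ?_
  rw [Pi.sub_apply, Pi.smul_apply, smul_eq_mul, sub_eq_zero,
    div_eq_iff (mt (hx j).1 j.2), eq_comm]

theorem simplexLine_span_pair_iff (hx : ∀ j, x j = 0 ↔ j = i₀) (hy : y i₀ ≠ 0) :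
    SimplexLine (span F {x, y}) ↔ Bijective (fun j : {j // j ≠ i₀} => y j / x j) := by
  rw [bijective_iff_existsUnique]
  constructor
  · intro hL c
    refine (simplexVec_sub_smul_iff hx hy c).1 (hL.2 _ ?_ ?_)
    · exact sub_mem (subset_span (by simp)) (smul_mem _ _ (subset_span (by simp)))
    · exact fun h => hy (by simpa [(hx i₀).2 rfl] using congrFun h i₀)
  · intro hb
    obtain ⟨⟨j, hj⟩, -⟩ := hb 0
    refine ⟨finrank_span_pair_eq_two (fun h => hj ((hx j).1 (by simp [h]))) ((hx i₀).2 rfl) hy, ?_⟩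
    rintro v hv hv0
    obtain ⟨a, b, rfl⟩ := mem_span_pair.1 hv
    by_cases hb0 : b = 0
    · subst hb0
      have ha : a ≠ 0 := by rintro rfl; simp at hv0
      rw [zero_smul, add_zero, simplexVec_smul_iff ha, simplexVec_iff_existsUnique]
      exact ⟨i₀, (hx i₀).2 rfl, fun j => (hx j).1⟩
    · have hv : a • x + b • y = b • (y - (-(a / b)) • x) := by
        rw [smul_sub, smul_smul, mul_neg, mul_div_cancel₀ a hb0]; module
      rw [hv, simplexVec_smul_iff hb0, simplexVec_sub_smul_iff hx hy]
      exact hb _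

theorem SimplexLine.existsUnique_mem_apply_eq {L : Submodule F (Fin n → F)} (hL : SimplexLine L)
    {i j : Fin n} (hij : i ≠ j) (a b : F) : ∃! v, v ∈ L ∧ v i = a ∧ v j = b := by
  let φ : L →ₗ[F] F × F := ((LinearMap.proj i).prod (LinearMap.proj j)).comp L.subtype
  have hinj : Injective φ := by
    refine (injective_iff_map_eq_zero φ).2 fun ⟨v, hvL⟩ hv => ?_
    by_contra hv0
    have hv : v i = 0 ∧ v j = 0 := Prod.ext_iff.1 hv
    exact hij ((simplexVec_iff_existsUnique.1 (hL.2 v hvL (by simpa using hv0))).unique hv.1 hv.2)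
  have hsurj : Surjective φ := (LinearMap.injective_iff_surjective_of_finrank_eq_finrank
    (by simp [hL.1])).1 hinj
  obtain ⟨⟨v, hvL⟩, hv⟩ := hsurj (a, b)
  refine ⟨v, ⟨hvL, congrArg Prod.fst hv, congrArg Prod.snd hv⟩, ?_⟩
  rintro w ⟨hwL, hwi, hwj⟩
  exact congrArg Subtype.val (hinj (a₁ := ⟨w, hwL⟩) (hv.trans (by simp [φ, hwi, hwj])).symm)

theorem simplexLine_span_vecOfRatio (hx : ∀ j, x j = 0 ↔ j = i₀) (e : {j // j ≠ i₀} ≃ F) :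
    SimplexLine (span F {x, vecOfRatio x i₀ e}) := by
  refine (simplexLine_span_pair_iff hx (by simp [vecOfRatio_self])).2 ?_
  simpa only [vecOfRatio_div hx] using e.bijective

theorem eq_of_span_vecOfRatio_eq (hx : ∀ j, x j = 0 ↔ j = i₀) (hj₀ : j₀ ≠ i₀)
    {e e' : {j // j ≠ i₀} ≃ F} (he : e ⟨j₀, hj₀⟩ = 0) (he' : e' ⟨j₀, hj₀⟩ = 0)
    (h : span F {x, vecOfRatio x i₀ e} = span F {x, vecOfRatio x i₀ e'}) : e = e' := by
  have hnorm : ∀ r : {j // j ≠ i₀} → F, r ⟨j₀, hj₀⟩ = 0 →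
      vecOfRatio x i₀ r i₀ = 1 ∧ vecOfRatio x i₀ r j₀ = 0 := fun r hr =>
    ⟨vecOfRatio_self r, by rw [vecOfRatio_of_ne r hj₀, hr, zero_mul]⟩
  have hv : vecOfRatio x i₀ e = vecOfRatio x i₀ e' :=
    ((simplexLine_span_vecOfRatio hx e).existsUnique_mem_apply_eq hj₀.symm 1 0).unique
      ⟨subset_span (by simp), hnorm e he⟩ ⟨h ▸ subset_span (by simp), hnorm e' he'⟩
  ext j
  rw [← vecOfRatio_div hx e j, hv, vecOfRatio_div hx e' j]

theorem exists_span_vecOfRatio_eq (hx : ∀ j, x j = 0 ↔ j = i₀) (hj₀ : j₀ ≠ i₀)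
    {L : Submodule F (Fin n → F)} (hL : SimplexLine L) (hxL : x ∈ L) :
    ∃ e : {j // j ≠ i₀} ≃ F, e ⟨j₀, hj₀⟩ = 0 ∧ span F {x, vecOfRatio x i₀ e} = L := by
  obtain ⟨y, ⟨hyL, hyi₀, hyj₀⟩, -⟩ := hL.existsUnique_mem_apply_eq hj₀.symm 1 0
  have hspan : span F {x, y} = L := by
    refine eq_of_le_of_finrank_eq (span_le.2 (Set.insert_subset hxL (by simpa using hyL))) ?_
    rw [hL.1, finrank_span_pair_eq_two (fun h => ?_) ((hx i₀).2 rfl) (by simp [hyi₀])]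
    exact hj₀ ((hx j₀).1 (by simp [h]))
  have hb := (simplexLine_span_pair_iff hx (by simp [hyi₀])).1 (hspan ▸ hL)
  refine ⟨Equiv.ofBijective _ hb, by simp [hyj₀], ?_⟩
  rw [Equiv.coe_ofBijective, vecOfRatio_div_self hx hyi₀, hspan]

noncomputable def simplexLinesThroughEquiv (hx : ∀ j, x j = 0 ↔ j = i₀) (hj₀ : j₀ ≠ i₀) :
    {e : {j // j ≠ i₀} ≃ F // e ⟨j₀, hj₀⟩ = 0} ≃
      {L : Submodule F (Fin n → F) // SimplexLine L ∧ span F {x} ≤ L} :=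
  Equiv.ofBijective
    (fun e => ⟨span F {x, vecOfRatio x i₀ e.1}, simplexLine_span_vecOfRatio hx e.1,
      span_mono (by simp)⟩)
    ⟨fun e e' h => Subtype.ext (eq_of_span_vecOfRatio_eq hx hj₀ e.2 e'.2 (congrArg Subtype.val h)),
      fun ⟨L, hL, hxL⟩ => by
        obtain ⟨e, he, hspan⟩ :=
          exists_span_vecOfRatio_eq hx hj₀ hL (hxL (mem_span_singleton_self x))
        exact ⟨⟨e, he⟩, Subtype.ext hspan⟩⟩

end

theorem simplex_point_on_factorial_lines_general
    (F : Type*) [Field F] [Fintype F] [DecidableEq F] (q : ℕ)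
    (hF : Fintype.card F = q)
    (P : Submodule F (Fin (q + 1) → F)) (hP : SimplexPoint P) :
    Nat.card {L : Submodule F (Fin (q + 1) → F) // SimplexLine L ∧ P ≤ L} =
      Nat.factorial (q - 1) := by
  obtain ⟨x, hxs, rfl⟩ := hP
  obtain ⟨i₀, hxi₀, huniq⟩ := simplexVec_iff_existsUnique.1 hxs
  have hx : ∀ j, x j = 0 ↔ j = i₀ := fun j => ⟨huniq j, fun h => h ▸ hxi₀⟩
  have hq : 0 < q := hF ▸ Fintype.card_pos
  obtain ⟨j₀, hj₀⟩ := Fintype.exists_ne_of_one_lt_card (by simpa using hq) i₀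
  have hcard : Fintype.card {j // j ≠ i₀} = Fintype.card F := by simp [hF]
  rw [← Nat.card_congr (simplexLinesThroughEquiv hx hj₀), Nat.card_eq_fintype_card,
    Fintype.card_subtype_equiv_apply_eq hcard, hcard, hF]

/-- Every simplex point of `F_q^(q+1)` lies on exactly `(q-1)!` simplex lines. -/
theorem simplex_point_on_factorial_lines
    (F : Type*) [Field F] [Fintype F] [DecidableEq F] (q : ℕ) (hq : 2 ≤ q)
    (hF : Fintype.card F = q)
    (P : Submodule F (Fin (q + 1) → F)) (hP : SimplexPoint P) :
    Nat.card {L : Submodule F (Fin (q + 1) → F) // SimplexLine L ∧ P ≤ L} =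
      Nat.factorial (q - 1) :=
  simplex_point_on_factorial_lines_general F q hF P hP
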